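/- Let d ≥ 1, γ, M ∈ SL₂(ℤ) and τ, ζ ∈ H. Then j₂(U₂([[0,d],[d,0]]) γ^↑ M^↓, diag(τ,ζ)) = (1 − (γτ)·d²(Mζ)) · j(γ,τ) · j(M,ζ). -/

import Mathlib

open Matrix

noncomputable def stmt17up (g : Matrix.SpecialLinearGroup (Fin 2) ℤ) :
    Matrix (Fin 4) (Fin 4) ℂ :=
  !![(g 0 0 : ℂ), 0, (g 0 1 : ℂ), 0; 0, 1, 0, 0;
     (g 1 0 : ℂ), 0, (g 1 1 : ℂ), 0; 0, 0, 0, 1]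

noncomputable def stmt17down (h : Matrix.SpecialLinearGroup (Fin 2) ℤ) :
    Matrix (Fin 4) (Fin 4) ℂ :=
  !![1, 0, 0, 0; 0, (h 0 0 : ℂ), 0, (h 0 1 : ℂ);
     0, 0, 1, 0; 0, (h 1 0 : ℂ), 0, (h 1 1 : ℂ)]

noncomputable def stmt17U2 (d : ℕ) : Matrix (Fin 4) (Fin 4) ℂ :=
  !![1, 0, 0, 0; 0, 1, 0, 0; 0, (d : ℂ), 1, 0; (d : ℂ), 0, 0, 1]

noncomputable def stmt17j2 (P : Matrix (Fin 4) (Fin 4) ℂ)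
    (Z : Matrix (Fin 2) (Fin 2) ℂ) : ℂ :=
  (!![P 2 0, P 2 1; P 3 0, P 3 1] * Z + !![P 2 2, P 2 3; P 3 2, P 3 3]).det

noncomputable def stmt17mobius (g : Matrix.SpecialLinearGroup (Fin 2) ℤ) (τ : ℂ) : ℂ :=
  ((g 0 0 : ℂ) * τ + (g 0 1 : ℂ)) / ((g 1 0 : ℂ) * τ + (g 1 1 : ℂ))

/-!
Write `γ = [[a, b], [c, e]]` and `M = [[a', b'], [c', e']]`. Multiplying out, for `Z = diag(τ, ζ)`
the matrix `CZ + D` of `U₂ γ^↑ M^↓` is `[[j(γ,τ), d(a'ζ + b')], [d(aτ + b), j(M,ζ)]]`, with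
determinant `j(γ,τ) j(M,ζ) - d²(aτ + b)(a'ζ + b')`. Since `j(γ,τ) j(M,ζ)` does not vanish on `ℍ`,
the second term is `d² (γτ)(Mζ) j(γ,τ) j(M,ζ)`.
-/

theorem stmt17U2_mul_stmt17up_mul_stmt17down (d : ℕ) (γ M : Matrix.SpecialLinearGroup (Fin 2) ℤ) :
    stmt17U2 d * stmt17up γ * stmt17down M =
      !![(γ 0 0 : ℂ), 0, (γ 0 1 : ℂ), 0;
        0, (M 0 0 : ℂ), 0, (M 0 1 : ℂ);
        (γ 1 0 : ℂ), d * (M 0 0 : ℂ), (γ 1 1 : ℂ), d * (M 0 1 : ℂ);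
        d * (γ 0 0 : ℂ), (M 1 0 : ℂ), d * (γ 0 1 : ℂ), (M 1 1 : ℂ)] := by
  ext i j
  fin_cases i <;> fin_cases j <;>
    simp [stmt17U2, stmt17up, stmt17down, Matrix.mul_apply, Fin.sum_univ_four]

theorem stmt17j2_stmt17U2_mul_stmt17up_mul_stmt17down (d : ℕ)
    (γ M : Matrix.SpecialLinearGroup (Fin 2) ℤ) (τ ζ : ℂ) :
    stmt17j2 (stmt17U2 d * stmt17up γ * stmt17down M) !![τ, 0; 0, ζ] =
      ((γ 1 0 : ℂ) * τ + γ 1 1) * ((M 1 0 : ℂ) * ζ + M 1 1) -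
        (d : ℂ) ^ 2 * ((γ 0 0 : ℂ) * τ + γ 0 1) * ((M 0 0 : ℂ) * ζ + M 0 1) := by
  rw [stmt17U2_mul_stmt17up_mul_stmt17down, stmt17j2]
  simp only [Matrix.of_apply, Matrix.cons_val', Matrix.cons_val, Matrix.cons_val_zero,
    Matrix.cons_val_one, Matrix.empty_val', Matrix.cons_val_fin_one, Matrix.det_fin_two,
    Matrix.add_apply, Matrix.mul_apply, Fin.sum_univ_two]
  ring

theorem stmt17_general (d : ℕ) (γ M : Matrix.SpecialLinearGroup (Fin 2) ℤ)
    (τ ζ : UpperHalfPlane) :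
    stmt17j2 (stmt17U2 d * stmt17up γ * stmt17down M) !![(τ : ℂ), 0; 0, (ζ : ℂ)] =
      (1 - stmt17mobius γ (τ : ℂ) * (d : ℂ) ^ 2 * stmt17mobius M (ζ : ℂ)) *
        ((γ 1 0 : ℂ) * (τ : ℂ) + (γ 1 1 : ℂ)) *
        ((M 1 0 : ℂ) * (ζ : ℂ) + (M 1 1 : ℂ)) := by
  have hγ : (γ 1 0 : ℂ) * τ + γ 1 1 ≠ 0 :=
    ModularGroup.denom_apply γ τ ▸ UpperHalfPlane.denom_ne_zero γ τ
  have hM : (M 1 0 : ℂ) * ζ + M 1 1 ≠ 0 :=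
    ModularGroup.denom_apply M ζ ▸ UpperHalfPlane.denom_ne_zero M ζ
  rw [stmt17j2_stmt17U2_mul_stmt17up_mul_stmt17down, stmt17mobius, stmt17mobius]
  field_simp

/-- For `d ≥ 1`, `γ, M ∈ SL₂(ℤ)` and `τ, ζ ∈ H`:
`j₂(U₂([[0,d],[d,0]]) γ^↑ M^↓, diag(τ,ζ)) = (1 − (γτ)·d²(Mζ)) · j(γ,τ) · j(M,ζ)`. -/
theorem stmt17 (d : ℕ) (hd : 1 ≤ d) (γ M : Matrix.SpecialLinearGroup (Fin 2) ℤ)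
    (τ ζ : UpperHalfPlane) :
    stmt17j2 (stmt17U2 d * stmt17up γ * stmt17down M) !![(τ : ℂ), 0; 0, (ζ : ℂ)] =
      (1 - stmt17mobius γ (τ : ℂ) * (d : ℂ) ^ 2 * stmt17mobius M (ζ : ℂ)) *
        ((γ 1 0 : ℂ) * (τ : ℂ) + (γ 1 1 : ℂ)) *
        ((M 1 0 : ℂ) * (ζ : ℂ) + (M 1 1 : ℂ)) :=
  stmt17_general d γ M τ ζ
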